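/- arXiv:2501.15883 — 6 statements merged into one kernel-verified Lean document; each statement's English description precedes it below -/
import Mathlib

section
/- For the complete graph K_n with n > 2, the mincut graph X(K_n) is isomorphic to K_n. -/
open SimpleGraph

/-- `X` is an edge-cut of the connected graph `G`: a set of edges of `G` whose
deletion disconnects `G`. -/
def IsEdgeCut {V : Type*} (G : SimpleGraph V) (X : Finset (Sym2 V)) : Prop :=
  G.Connected ∧ ↑X ⊆ G.edgeSet ∧ ¬(G.deleteEdges ↑X).Connected

/-- The edge-connectivity `λ(G)`: the minimum cardinality of an edge-cut. -/
noncomputable def edgeConn {V : Type*} (G : SimpleGraph V) : ℕ :=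
  sInf {n | ∃ X : Finset (Sym2 V), X.card = n ∧ IsEdgeCut G X}

/-- A mincut is an edge-cut of minimum cardinality. -/
def IsMincut {V : Type*} (G : SimpleGraph V) (X : Finset (Sym2 V)) : Prop :=
  IsEdgeCut G X ∧ X.card = edgeConn G

/-- The mincut graph `X(G)`: the intersection graph of the mincuts of `G`. -/
def mincutGraph {V : Type*} [DecidableEq V] (G : SimpleGraph V) :
    SimpleGraph {X : Finset (Sym2 V) // IsMincut G X} :=
  SimpleGraph.fromRel (fun X Y => (X.1 ∩ Y.1).Nonempty)

/-- A mincut is trivial if it is the set of edges incident on a single vertex. -/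
def IsTrivialMincut {V : Type*} (G : SimpleGraph V) (X : Finset (Sym2 V)) : Prop :=
  IsMincut G X ∧ ∃ v : V, ↑X = G.incidenceSet v

/-- `MincutSides G X A` says `X` is a mincut of `G` whose two sides are `A` and `Aᶜ`,
i.e. `X = ⟨A, Ā⟩`. -/
def MincutSides {V : Type*} (G : SimpleGraph V) (X : Finset (Sym2 V)) (A : Set V) : Prop :=
  IsMincut G X ∧ A.Nonempty ∧ Aᶜ.Nonempty ∧
  (↑X = {e | e ∈ G.edgeSet ∧ ∃ a ∈ A, ∃ b ∈ Aᶜ, e = s(a, b)}) ∧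
  (G.induce A).Connected ∧ (G.induce Aᶜ).Connected

/-- Two mincuts with sides `A` and `B` cross (overlap). -/
def Crossing {V : Type*} (A B : Set V) : Prop :=
  (A ∩ B).Nonempty ∧ (Aᶜ ∩ B).Nonempty ∧ (A ∩ Bᶜ).Nonempty ∧ (Aᶜ ∩ Bᶜ).Nonempty

/-- The number of edges of `G` with one endpoint in `S` and the other in `T`. -/
noncomputable def betweenEdges {V : Type*} (G : SimpleGraph V) (S T : Set V) : ℕ :=
  {e | e ∈ G.edgeSet ∧ ∃ a ∈ S, ∃ b ∈ T, e = s(a, b)}.ncard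

/-!
If deleting an edge set `X` disconnects the complete graph on `V`, let `S` be the component of
some vertex. Every edge between `S` and `Sᶜ` lies in `X`, so
`|X| ≥ |S| |Sᶜ| ≥ |S| + |Sᶜ| - 1 = |V| - 1`, with equality only if `S` or `Sᶜ` is a single
vertex, i.e. only if `X` is a star. Hence the mincuts of `Kₙ` are exactly its `n` stars; for
`n > 2` distinct vertices have distinct stars, and these always share the edge joining the two
vertices.
-/

open Finset

theorem SimpleGraph.mem_of_reachable_deleteEdges {V : Type*} {G : SimpleGraph V}
    {X : Set (Sym2 V)} {v a b : V} (ha : (G.deleteEdges X).Reachable v a)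
    (hb : ¬(G.deleteEdges X).Reachable v b) (hab : G.Adj a b) : s(a, b) ∈ X := by
  by_contra h
  exact hb (ha.trans ((deleteEdges_adj ..).2 ⟨hab, h⟩).reachable)

section CompleteGraph

variable {V : Type*} [Fintype V] [DecidableEq V]

def boundaryEdges (S : Finset V) : Finset (Sym2 V) :=
  (S ×ˢ Sᶜ).image fun p => s(p.1, p.2)

theorem mk_mem_boundaryEdges {S : Finset V} {a b : V} :
    s(a, b) ∈ boundaryEdges S ↔ a ∈ S ∧ b ∉ S ∨ b ∈ S ∧ a ∉ S := by
  simp only [boundaryEdges, mem_image, mem_product, mem_compl, Prod.exists, Sym2.eq_iff]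
  constructor
  · rintro ⟨x, y, ⟨hx, hy⟩, ⟨rfl, rfl⟩ | ⟨rfl, rfl⟩⟩
    exacts [Or.inl ⟨hx, hy⟩, Or.inr ⟨hx, hy⟩]
  · rintro (⟨ha, hb⟩ | ⟨hb, ha⟩)
    exacts [⟨a, b, ⟨ha, hb⟩, Or.inl ⟨rfl, rfl⟩⟩, ⟨b, a, ⟨hb, ha⟩, Or.inr ⟨rfl, rfl⟩⟩]

theorem card_boundaryEdges (S : Finset V) : #(boundaryEdges S) = #S * #Sᶜ := by
  rw [boundaryEdges, card_image_of_injOn, card_product]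
  rintro ⟨a, b⟩ hab ⟨a', b'⟩ hab' h
  simp only [coe_product, Set.mem_prod, mem_coe, mem_compl] at hab hab'
  rcases Sym2.eq_iff.1 h with ⟨rfl, rfl⟩ | ⟨rfl, rfl⟩
  · rfl
  · exact absurd hab.1 hab'.2

theorem boundaryEdges_compl (S : Finset V) : boundaryEdges Sᶜ = boundaryEdges S := by
  ext e
  induction e using Sym2.ind with
  | _ a b => simp only [mk_mem_boundaryEdges, mem_compl, not_not]; tauto

theorem boundaryEdges_singleton (v : V) :
    boundaryEdges {v} = (⊤ : SimpleGraph V).incidenceFinset v := by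
  ext e
  induction e using Sym2.ind with
  | _ a b =>
    simp only [mk_mem_boundaryEdges, mem_singleton, mem_incidenceFinset,
      mk'_mem_incidenceSet_iff, top_adj]
    grind

theorem card_incidenceFinset_top (v : V) :
    #((⊤ : SimpleGraph V).incidenceFinset v) = Fintype.card V - 1 := by
  rw [card_incidenceFinset_eq_degree, complete_graph_degree]

theorem IsEdgeCut.exists_boundaryEdges_subset {X : Finset (Sym2 V)} (hX : IsEdgeCut ⊤ X) :
    ∃ S : Finset V, S.Nonempty ∧ Sᶜ.Nonempty ∧ boundaryEdges S ⊆ X := by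
  classical
  obtain ⟨v, w, hvw⟩ : ∃ v w, ¬((⊤ : SimpleGraph V).deleteEdges ↑X).Reachable v w := by
    have := hX.1.nonempty
    by_contra! h
    exact hX.2.2 ⟨h⟩
  refine ⟨({u | ((⊤ : SimpleGraph V).deleteEdges ↑X).Reachable v u} : Finset V), ⟨v, by simp⟩,
    ⟨w, by simpa using hvw⟩, ?_⟩
  intro e he
  obtain ⟨⟨a, b⟩, hab, rfl⟩ := mem_image.1 he
  simp only [mem_product, mem_compl, mem_filter_univ] at hab
  have hne : a ≠ b := by rintro rfl; exact hab.2 hab.1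
  exact mem_of_reachable_deleteEdges hab.1 hab.2 ((top_adj _ _).2 hne)

theorem IsEdgeCut.card_sub_one_le_card {X : Finset (Sym2 V)} (hX : IsEdgeCut ⊤ X) :
    Fintype.card V - 1 ≤ #X := by
  obtain ⟨S, hS, hSc, hsub⟩ := hX.exists_boundaryEdges_subset
  have hprod := (card_boundaryEdges S).symm.trans_le (card_le_card hsub)
  have hsum := card_add_card_compl S
  have := hS.card_pos
  have := hSc.card_pos
  have : #S + #Sᶜ ≤ #S * #Sᶜ + 1 := by nlinarith
  omega

theorem IsEdgeCut.exists_eq_incidenceFinset {X : Finset (Sym2 V)} (hX : IsEdgeCut ⊤ X)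
    (hcard : #X ≤ Fintype.card V - 1) : ∃ v, X = (⊤ : SimpleGraph V).incidenceFinset v := by
  obtain ⟨S, hS, hSc, hsub⟩ := hX.exists_boundaryEdges_subset
  have hprod := (card_boundaryEdges S).symm.trans_le (card_le_card hsub)
  have hsum := card_add_card_compl S
  obtain ⟨T, hT, hTsub⟩ : ∃ T : Finset V, #T = 1 ∧ boundaryEdges T ⊆ X := by
    by_contra! h
    have hS1 : #S ≠ 1 := fun h1 => h S h1 hsub
    have hSc1 : #Sᶜ ≠ 1 := fun h1 => h Sᶜ h1 (by rwa [boundaryEdges_compl])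
    have := hS.card_pos
    have := hSc.card_pos
    have := add_le_mul (a := #S) (b := #Sᶜ) (by omega) (by omega)
    have := this.trans (hprod.trans hcard)
    omega
  obtain ⟨v, rfl⟩ := card_eq_one.1 hT
  refine ⟨v, (eq_of_subset_of_card_le ?_ ?_).symm⟩
  · rwa [← boundaryEdges_singleton]
  · rwa [card_incidenceFinset_top]

theorem isEdgeCut_incidenceFinset_top [Nontrivial V] (v : V) :
    IsEdgeCut ⊤ ((⊤ : SimpleGraph V).incidenceFinset v) := by
  refine ⟨connected_top, by simpa using incidenceSet_subset ⊤ v, ?_⟩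
  intro hconn
  obtain ⟨w, hw⟩ := exists_ne v
  obtain ⟨p⟩ := hconn.preconnected v w
  cases p with
  | nil => exact hw rfl
  | cons hadj _ =>
    rw [deleteEdges_adj] at hadj
    exact hadj.2 (by simpa using hadj.1.ne)

theorem edgeConn_top [Nontrivial V] : edgeConn (⊤ : SimpleGraph V) = Fintype.card V - 1 := by
  obtain ⟨v⟩ := ‹Nontrivial V›.to_nonempty
  have hstar : Fintype.card V - 1 ∈ {m | ∃ X : Finset (Sym2 V), #X = m ∧ IsEdgeCut ⊤ X} :=
    ⟨_, card_incidenceFinset_top v, isEdgeCut_incidenceFinset_top v⟩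
  refine le_antisymm (Nat.sInf_le hstar) (le_csInf ⟨_, hstar⟩ ?_)
  rintro m ⟨X, rfl, hX⟩
  exact hX.card_sub_one_le_card

theorem isMincut_top_iff [Nontrivial V] {X : Finset (Sym2 V)} :
    IsMincut ⊤ X ↔ ∃ v, X = (⊤ : SimpleGraph V).incidenceFinset v := by
  constructor
  · rintro ⟨hX, hcard⟩
    exact hX.exists_eq_incidenceFinset (by rw [hcard, edgeConn_top])
  · rintro ⟨v, rfl⟩
    exact ⟨isEdgeCut_incidenceFinset_top v, by rw [card_incidenceFinset_top, edgeConn_top]⟩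

theorem incidenceFinset_top_injective (hV : 2 < Fintype.card V) :
    Function.Injective fun v : V => (⊤ : SimpleGraph V).incidenceFinset v := by
  intro v w hvw
  dsimp only at hvw
  by_contra hne
  have hinter : (⊤ : SimpleGraph V).incidenceFinset v = {s(v, w)} := by
    rw [← coe_inj, coe_singleton,
      ← incidenceSet_inter_incidenceSet_of_adj ⊤ ((top_adj v w).2 hne),
      ← coe_incidenceFinset, ← coe_incidenceFinset, hvw, Set.inter_self]
  have := card_incidenceFinset_top v
  rw [hinter, card_singleton] at this
  omega

noncomputable def mincutGraphTopIso (hV : 2 < Fintype.card V) :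
    (⊤ : SimpleGraph V) ≃g mincutGraph (⊤ : SimpleGraph V) :=
  have : Nontrivial V := Fintype.one_lt_card_iff_nontrivial.1 (by omega)
  { toEquiv := Equiv.ofBijective
      (fun v => ⟨(⊤ : SimpleGraph V).incidenceFinset v, isMincut_top_iff.2 ⟨v, rfl⟩⟩)
      ⟨fun v w h => incidenceFinset_top_injective hV (congrArg Subtype.val h),
        fun ⟨_, hX⟩ => (isMincut_top_iff.1 hX).imp fun v hv => Subtype.ext hv.symm⟩
    map_rel_iff' {v w} := by
      rw [mincutGraph, fromRel_adj, (Equiv.injective _).ne_iff, top_adj]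
      refine ⟨And.left, fun hne => ⟨hne, Or.inl ⟨s(v, w), mem_inter.2 ?_⟩⟩⟩
      show s(v, w) ∈ (⊤ : SimpleGraph V).incidenceFinset v ∧
        s(v, w) ∈ (⊤ : SimpleGraph V).incidenceFinset w
      simp [mk'_mem_incidenceSet_iff, hne] }

end CompleteGraph

/-- For `n > 2`, `X(Kₙ) ≅ Kₙ`. -/
theorem stmt_1 (n : ℕ) (hn : 2 < n) :
    Nonempty ((⊤ : SimpleGraph (Fin n)) ≃g mincutGraph (⊤ : SimpleGraph (Fin n))) :=
  ⟨mincutGraphTopIso (by rwa [Fintype.card_fin])⟩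
end

section
/- For the complete bipartite graph K_{n,n} with n > 2, the mincut graph X(K_{n,n}) is isomorphic to K_{n,n}. -/
open SimpleGraph

/-!
A set of edges disconnects `K_{n,n}` exactly when it contains the edge boundary of some nonempty
proper vertex set `A`. If `A` has `a` vertices on the left and `b` on the right, its boundary has
`a(n-b) + (n-a)b` edges, which exceeds `n` unless `A` or its complement is a single vertex `v`; the
boundary is then the star of `n` edges at `v`. Hence `λ(K_{n,n}) = n` and the mincuts are exactly
the stars. For `n ≥ 2` distinct vertices have distinct stars, and two stars meet exactly when their
centres are adjacent, so `v ↦ star v` is an isomorphism onto the mincut graph.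
-/

open Finset

/-- `a, b` and `a', b'` count the left and right vertices of a vertex set of `K_{n,n}` and of
its complement. -/
lemma lt_mul_add_mul {n a a' b b' : ℕ} (hn : 2 < n) (ha : a + a' = n) (hb : b + b' = n)
    (h : 2 ≤ a + b) (h' : 2 ≤ a' + b') : n < a * b' + a' * b := by
  rcases Nat.eq_zero_or_pos a with rfl | _ <;> rcases Nat.eq_zero_or_pos b with rfl | _ <;>
    rcases Nat.eq_zero_or_pos a' with rfl | _ <;> rcases Nat.eq_zero_or_pos b' with rfl | _ <;>
    nlinarith

section Sum

variable {α β : Type*} [Fintype α] [Fintype β] [DecidableEq α] [DecidableEq β]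

lemma Finset.toLeft_compl (A : Finset (α ⊕ β)) : Aᶜ.toLeft = A.toLeftᶜ := by
  ext; simp

lemma Finset.toRight_compl (A : Finset (α ⊕ β)) : Aᶜ.toRight = A.toRightᶜ := by
  ext; simp

end Sum

namespace SimpleGraph

variable {V : Type*} (G : SimpleGraph V)

def edgeBoundary (A : Set V) : Set (Sym2 V) :=
  {e | ∃ a ∈ A, ∃ b ∉ A, G.Adj a b ∧ s(a, b) = e}

variable {G}

lemma edgeBoundary_compl (A : Set V) : G.edgeBoundary Aᶜ = G.edgeBoundary A := by
  ext e
  constructor <;>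
  · rintro ⟨a, ha, b, hb, hab, rfl⟩
    exact ⟨b, by simpa using hb, a, by simpa using ha, hab.symm, Sym2.eq_swap⟩

lemma edgeBoundary_singleton (v : V) : G.edgeBoundary {v} = G.incidenceSet v := by
  ext e
  constructor
  · rintro ⟨a, rfl, b, -, hab, rfl⟩
    exact ⟨hab, Sym2.mem_mk_left _ _⟩
  · rintro ⟨he, hv⟩
    obtain ⟨w, rfl⟩ := Sym2.mem_iff_exists.1 hv
    exact ⟨v, rfl, w, he.ne.symm, he, rfl⟩

lemma not_connected_deleteEdges_iff (hG : G.Connected) {s : Set (Sym2 V)} :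
    ¬(G.deleteEdges s).Connected ↔
      ∃ A : Set V, A.Nonempty ∧ Aᶜ.Nonempty ∧ G.edgeBoundary A ⊆ s := by
  constructor
  · intro hdisc
    have : ¬(G.deleteEdges s).Preconnected := fun h => hdisc ((connected_iff _).2 ⟨h, hG.nonempty⟩)
    obtain ⟨u, w, huw⟩ : ∃ u w, ¬(G.deleteEdges s).Reachable u w := by
      simpa [Preconnected] using this
    refine ⟨{x | (G.deleteEdges s).Reachable u x}, ⟨u, .rfl⟩, ⟨w, huw⟩, ?_⟩
    rintro _ ⟨a, ha, b, hb, hab, rfl⟩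
    by_contra he
    exact hb (ha.trans (deleteEdges_adj.2 ⟨hab, he⟩).reachable)
  · rintro ⟨A, ⟨u, hu⟩, ⟨w, hw⟩, hsub⟩ hconn
    obtain ⟨p⟩ := hconn.preconnected u w
    obtain ⟨d, -, hd, hd'⟩ := p.exists_boundary_dart A hu hw
    have hadj := deleteEdges_adj.1 d.adj
    exact hadj.2 (hsub ⟨_, hd, _, hd', hadj.1, rfl⟩)

section Finite

variable [Fintype V] [DecidableEq V] [DecidableRel G.Adj]

lemma isEdgeCut_incidenceFinset (hG : G.Connected) {v w : V} (hvw : w ≠ v) :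
    IsEdgeCut G (G.incidenceFinset v) := by
  refine ⟨hG, by simpa using G.incidenceSet_subset v, (not_connected_deleteEdges_iff hG).2 ?_⟩
  exact ⟨{v}, Set.singleton_nonempty v, ⟨w, hvw⟩, by simp [edgeBoundary_singleton]⟩

lemma incidenceFinset_injective (hdeg : ∀ v, 1 < G.degree v) :
    Function.Injective fun v => G.incidenceFinset v := by
  intro u v (huv : G.incidenceFinset u = G.incidenceFinset v)
  by_contra hne
  have hsub : G.incidenceFinset u ⊆ {s(u, v)} := by
    intro e he
    have := G.incidenceSet_inter_incidenceSet_subset hne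
      ⟨(G.mem_incidenceFinset u e).1 he, (G.mem_incidenceFinset v e).1 (huv ▸ he)⟩
    simpa using this
  have := (card_le_card hsub).trans_eq (card_singleton _)
  rw [card_incidenceFinset_eq_degree] at this
  exact (hdeg u).not_ge this

lemma incidenceFinset_inter_nonempty_iff {u v : V} (hne : u ≠ v) :
    (G.incidenceFinset u ∩ G.incidenceFinset v).Nonempty ↔ G.Adj u v := by
  rw [← coe_nonempty, coe_inter, coe_incidenceFinset, coe_incidenceFinset]
  by_cases h : G.Adj u v
  · simp [h, incidenceSet_inter_incidenceSet_of_adj]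
  · simp [h, incidenceSet_inter_incidenceSet_of_not_adj _ h hne]

lemma nonempty_iso_mincutGraph (hdeg : ∀ v, 1 < G.degree v)
    (hmin : ∀ X, IsMincut G X ↔ ∃ v, X = G.incidenceFinset v) :
    Nonempty (G ≃g mincutGraph G) := by
  let f : V → {X // IsMincut G X} := fun v => ⟨G.incidenceFinset v, (hmin _).2 ⟨v, rfl⟩⟩
  have hf : Function.Bijective f := by
    refine ⟨fun u v h => incidenceFinset_injective hdeg (congrArg Subtype.val h), ?_⟩
    rintro ⟨X, hX⟩
    obtain ⟨v, rfl⟩ := (hmin X).1 hX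
    exact ⟨v, rfl⟩
  refine ⟨⟨Equiv.ofBijective f hf, fun {u v} => ?_⟩⟩
  change (mincutGraph G).Adj (f u) (f v) ↔ G.Adj u v
  rw [mincutGraph, fromRel_adj, hf.injective.ne_iff, inter_comm (f v).1, or_self]
  exact ⟨fun ⟨hne, h⟩ => (incidenceFinset_inter_nonempty_iff hne).1 h,
    fun h => ⟨h.ne, (incidenceFinset_inter_nonempty_iff h.ne).2 h⟩⟩

end Finite

section CompleteBipartite

variable {α β : Type*}

instance : DecidableRel (completeBipartiteGraph α β).Adj :=
  fun _ _ => inferInstanceAs (Decidable (_ ∨ _))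

lemma completeBipartiteGraph_connected [Nonempty α] [Nonempty β] :
    (completeBipartiteGraph α β).Connected := by
  obtain ⟨a⟩ := ‹Nonempty α›
  obtain ⟨b⟩ := ‹Nonempty β›
  have hreach : ∀ v, (completeBipartiteGraph α β).Reachable v (.inr b) := by
    rintro (a' | b')
    · exact Adj.reachable (by simp)
    · have : (completeBipartiteGraph α β).Adj (.inr b') (.inl a) := by simp
      exact this.reachable.trans (Adj.reachable (by simp))
  exact (connected_iff _).2 ⟨fun u v => (hreach u).trans (hreach v).symm, ⟨.inr b⟩⟩

variable [Fintype α] [Fintype β]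

lemma completeBipartiteGraph_degree_inl (a : α) :
    (completeBipartiteGraph α β).degree (.inl a) = Fintype.card β := by
  rw [← card_neighborFinset_eq_degree,
    show (completeBipartiteGraph α β).neighborFinset (.inl a) = univ.map .inr by
      ext (x | x) <;> simp]
  simp

lemma completeBipartiteGraph_degree_inr (b : β) :
    (completeBipartiteGraph α β).degree (.inr b) = Fintype.card α := by
  rw [← card_neighborFinset_eq_degree,
    show (completeBipartiteGraph α β).neighborFinset (.inr b) = univ.map .inl by
      ext (x | x) <;> simp]
  simp

variable [DecidableEq α] [DecidableEq β]

lemma card_le_of_edgeBoundary_subset {A : Finset (α ⊕ β)} {X : Finset (Sym2 (α ⊕ β))}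
    (h : (completeBipartiteGraph α β).edgeBoundary A ⊆ X) :
    #A.toLeft * #Aᶜ.toRight + #Aᶜ.toLeft * #A.toRight ≤ #X := by
  have hdisj : Disjoint (A.toLeft ×ˢ Aᶜ.toRight) (Aᶜ.toLeft ×ˢ A.toRight) :=
    disjoint_product.2 <| .inl <| toLeft_compl A ▸ disjoint_compl_right
  rw [← card_product, ← card_product, ← card_union_of_disjoint hdisj]
  refine card_le_card_of_injOn (fun p => s(.inl p.1, .inr p.2)) ?_ ?_
  · rintro ⟨a, b⟩ hab
    apply h
    simp only [coe_union, coe_product, Set.mem_union, Set.mem_prod, mem_coe, mem_toLeft,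
      mem_toRight, mem_compl] at hab
    rcases hab with ⟨ha, hb⟩ | ⟨ha, hb⟩
    · exact ⟨_, ha, _, hb, by simp, rfl⟩
    · exact ⟨_, hb, _, ha, by simp, Sym2.eq_swap⟩
  · rintro ⟨a, b⟩ - ⟨a', b'⟩ - h
    simpa using h

end CompleteBipartite

section CompleteBipartiteSquare

variable {α : Type*} [Fintype α] [DecidableEq α]

lemma card_incidenceFinset_completeBipartiteGraph (v : α ⊕ α) :
    #((completeBipartiteGraph α α).incidenceFinset v) = Fintype.card α := by
  rw [card_incidenceFinset_eq_degree]
  rcases v with a | a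
  exacts [completeBipartiteGraph_degree_inl a, completeBipartiteGraph_degree_inr a]

lemma exists_incidenceFinset_subset_or_card_lt (hn : 2 < Fintype.card α)
    {X : Finset (Sym2 (α ⊕ α))} (hX : IsEdgeCut (completeBipartiteGraph α α) X) :
    (∃ v, (completeBipartiteGraph α α).incidenceFinset v ⊆ X) ∨ Fintype.card α < #X := by
  obtain ⟨A, hA, hAc, hsub⟩ := (not_connected_deleteEdges_iff hX.1).1 hX.2.2
  lift A to Finset (α ⊕ α) using A.toFinite
  rw [coe_nonempty] at hA
  rw [← coe_compl, coe_nonempty] at hAc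
  by_cases h1 : #A = 1
  · obtain ⟨v, rfl⟩ := card_eq_one.1 h1
    refine .inl ⟨v, ?_⟩
    rwa [← coe_subset, coe_incidenceFinset, ← edgeBoundary_singleton, ← coe_singleton]
  by_cases h2 : #Aᶜ = 1
  · obtain ⟨v, hv⟩ := card_eq_one.1 h2
    refine .inl ⟨v, ?_⟩
    rwa [← coe_subset, coe_incidenceFinset, ← edgeBoundary_singleton, ← coe_singleton, ← hv,
      coe_compl, edgeBoundary_compl]
  refine .inr ((lt_mul_add_mul hn ?_ ?_ ?_ ?_).trans_le (card_le_of_edgeBoundary_subset hsub))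
  · rw [toLeft_compl, card_add_card_compl]
  · rw [toRight_compl, card_add_card_compl]
  · have := hA.card_pos
    rw [card_toLeft_add_card_toRight]
    omega
  · have := hAc.card_pos
    rw [card_toLeft_add_card_toRight]
    omega

lemma isEdgeCut_incidenceFinset_completeBipartiteGraph (v : α ⊕ α) :
    IsEdgeCut (completeBipartiteGraph α α) ((completeBipartiteGraph α α).incidenceFinset v) :=
  have : Nonempty α := ⟨v.elim id id⟩
  isEdgeCut_incidenceFinset completeBipartiteGraph_connected (w := v.swap) (by cases v <;> simp)

lemma edgeConn_completeBipartiteGraph (hn : 2 < Fintype.card α) :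
    edgeConn (completeBipartiteGraph α α) = Fintype.card α := by
  obtain ⟨a⟩ : Nonempty α := Fintype.card_pos_iff.1 (by omega)
  have hstar : Fintype.card α ∈ {k | ∃ X, #X = k ∧ IsEdgeCut (completeBipartiteGraph α α) X} :=
    ⟨_, card_incidenceFinset_completeBipartiteGraph (.inl a),
      isEdgeCut_incidenceFinset_completeBipartiteGraph _⟩
  refine le_antisymm (Nat.sInf_le hstar) (le_csInf ⟨_, hstar⟩ ?_)
  rintro _ ⟨X, rfl, hX⟩
  rcases exists_incidenceFinset_subset_or_card_lt hn hX with ⟨v, hv⟩ | h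
  · exact (card_incidenceFinset_completeBipartiteGraph v).symm.le.trans (card_le_card hv)
  · exact h.le

lemma isMincut_completeBipartiteGraph_iff (hn : 2 < Fintype.card α) {X : Finset (Sym2 (α ⊕ α))} :
    IsMincut (completeBipartiteGraph α α) X ↔
      ∃ v, X = (completeBipartiteGraph α α).incidenceFinset v := by
  rw [IsMincut, edgeConn_completeBipartiteGraph hn]
  constructor
  · rintro ⟨hX, hcard⟩
    rcases exists_incidenceFinset_subset_or_card_lt hn hX with ⟨v, hv⟩ | h
    · refine ⟨v, (eq_of_subset_of_card_le hv ?_).symm⟩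
      rw [hcard, card_incidenceFinset_completeBipartiteGraph]
    · omega
  · rintro ⟨v, rfl⟩
    exact ⟨isEdgeCut_incidenceFinset_completeBipartiteGraph v,
      card_incidenceFinset_completeBipartiteGraph v⟩

end CompleteBipartiteSquare

end SimpleGraph

/-- For `n > 2`, `X(K_{n,n}) ≅ K_{n,n}`. -/
theorem stmt_2 (n : ℕ) (hn : 2 < n) :
    Nonempty (completeBipartiteGraph (Fin n) (Fin n) ≃g
      mincutGraph (completeBipartiteGraph (Fin n) (Fin n))) := by
  have hcard : 2 < Fintype.card (Fin n) := by simpa using hn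
  refine nonempty_iso_mincutGraph (fun v => ?_) fun X => isMincut_completeBipartiteGraph_iff hcard
  rw [← card_incidenceFinset_eq_degree, card_incidenceFinset_completeBipartiteGraph]
  omega
end

section
/- Let X = ⟨A, Ā⟩ and Y = ⟨B, B̄⟩ be two crossing (overlapping) mincuts of a simple connected graph G with edge-connectivity λ. Then the number of edges between Ā∩B̄ and A∩B̄, between Ā∩B̄ and Ā∩B, between A∩B and A∩B̄, and between A∩B and Ā∩B each equal λ/2, and there are no edges between Ā∩B̄ and A∩B, nor between Ā∩B and A∩B̄. -/
open SimpleGraph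

/-!
Split the vertex set into the quadrants `P = A ∩ B`, `Q = A ∩ B̄`, `R = Ā ∩ B`, `S = Ā ∩ B̄`.
Each of `X`, `Y` is the sum of four quadrant counts equal to `λ`, and each quadrant, being
nonempty with nonempty complement, has at least `λ` edges leaving it. Adding the bounds for the
opposite quadrants `P`, `S` and subtracting `|X| + |Y| = 2λ` leaves `2 e(Q, R) ≤ 0`; likewise
`Q`, `R` give `e(P, S) = 0`. With the diagonals gone, the six (in)equalities force every
remaining count to be `λ / 2`.
-/

section

variable {V : Type*} (G : SimpleGraph V)

lemma betweenEdges_comm (S T : Set V) : betweenEdges G S T = betweenEdges G T S := by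
  unfold betweenEdges
  congr 1
  ext e
  constructor <;> rintro ⟨he, a, ha, b, hb, rfl⟩ <;> exact ⟨he, b, hb, a, ha, Sym2.eq_swap⟩

variable [Finite V]

lemma betweenEdges_union_right {S T₁ T₂ : Set V} (hT : Disjoint T₁ T₂) (hS : Disjoint S T₁) :
    betweenEdges G S (T₁ ∪ T₂) = betweenEdges G S T₁ + betweenEdges G S T₂ := by
  unfold betweenEdges
  rw [← Set.ncard_union_eq ?_ (Set.toFinite _) (Set.toFinite _)]
  · congr 1
    ext e
    simp only [Set.mem_union]
    constructor
    · rintro ⟨he, a, ha, b, hb | hb, rfl⟩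
      exacts [Or.inl ⟨he, a, ha, b, hb, rfl⟩, Or.inr ⟨he, a, ha, b, hb, rfl⟩]
    · rintro (⟨he, a, ha, b, hb, rfl⟩ | ⟨he, a, ha, b, hb, rfl⟩)
      exacts [⟨he, a, ha, b, Or.inl hb, rfl⟩, ⟨he, a, ha, b, Or.inr hb, rfl⟩]
  · rw [Set.disjoint_left]
    rintro e ⟨-, a, ha, b, hb, rfl⟩ ⟨-, a', ha', b', hb', heq⟩
    rcases Sym2.eq_iff.mp heq with ⟨-, rfl⟩ | ⟨-, rfl⟩
    · exact hT.ne_of_mem hb hb' rfl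
    · exact hS.ne_of_mem ha' hb rfl

lemma betweenEdges_eq_inter_add_inter_compl_right {S T : Set V} (h : Disjoint S T) (C : Set V) :
    betweenEdges G S T = betweenEdges G S (T ∩ C) + betweenEdges G S (T ∩ Cᶜ) := by
  have hC : Disjoint (T ∩ C) (T ∩ Cᶜ) :=
    disjoint_compl_right.mono Set.inter_subset_right Set.inter_subset_right
  rw [← betweenEdges_union_right G hC (h.mono_right Set.inter_subset_left), Set.inter_union_compl]

lemma betweenEdges_eq_inter_add_inter_compl_left {S T : Set V} (h : Disjoint S T) (C : Set V) :
    betweenEdges G S T = betweenEdges G (S ∩ C) T + betweenEdges G (S ∩ Cᶜ) T := by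
  simp only [betweenEdges_comm G _ T]
  exact betweenEdges_eq_inter_add_inter_compl_right G h.symm C

lemma betweenEdges_compl_eq_quadrants (A B : Set V) :
    betweenEdges G A Aᶜ =
      betweenEdges G (A ∩ B) (Aᶜ ∩ B) + betweenEdges G (A ∩ B) (Aᶜ ∩ Bᶜ) +
      betweenEdges G (A ∩ Bᶜ) (Aᶜ ∩ B) + betweenEdges G (A ∩ Bᶜ) (Aᶜ ∩ Bᶜ) := by
  have hA : Disjoint A Aᶜ := disjoint_compl_right
  rw [betweenEdges_eq_inter_add_inter_compl_left G hA B,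
    betweenEdges_eq_inter_add_inter_compl_right G (hA.mono_left Set.inter_subset_left) B,
    betweenEdges_eq_inter_add_inter_compl_right G (hA.mono_left Set.inter_subset_left) B,
    ← add_assoc]

lemma betweenEdges_inter_compl_eq (A B : Set V) :
    betweenEdges G (A ∩ B) (A ∩ B)ᶜ =
      betweenEdges G (A ∩ B) (A ∩ Bᶜ) + betweenEdges G (A ∩ B) (Aᶜ ∩ B) +
      betweenEdges G (A ∩ B) (Aᶜ ∩ Bᶜ) := by
  have hAB : Disjoint (A ∩ B) (A ∩ B)ᶜ := disjoint_compl_right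
  have hA : Disjoint (A ∩ B) Aᶜ := disjoint_compl_right.mono_left Set.inter_subset_left
  have hQ : (A ∩ B)ᶜ ∩ A = A ∩ Bᶜ := by ext; simp; tauto
  have hAc : (A ∩ B)ᶜ ∩ Aᶜ = Aᶜ :=
    Set.inter_eq_right.mpr (Set.compl_subset_compl.mpr Set.inter_subset_left)
  rw [betweenEdges_eq_inter_add_inter_compl_right G hAB A, hQ, hAc,
    betweenEdges_eq_inter_add_inter_compl_right G hA B, ← add_assoc]

lemma edgeConn_le_betweenEdges_compl (hG : G.Connected) {S : Set V} (hS : S.Nonempty)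
    (hSc : Sᶜ.Nonempty) : edgeConn G ≤ betweenEdges G S Sᶜ := by
  set E : Set (Sym2 V) := {e | e ∈ G.edgeSet ∧ ∃ a ∈ S, ∃ b ∈ Sᶜ, e = s(a, b)}
  have hE : E.Finite := Set.toFinite _
  have hcard : betweenEdges G S Sᶜ = hE.toFinset.card := by
    rw [betweenEdges, ← Set.ncard_coe_finset, Set.Finite.coe_toFinset]
  refine hcard ▸ Nat.sInf_le ⟨hE.toFinset, rfl, hG, fun e he => ?_, fun hcon => ?_⟩
  · exact (hE.mem_toFinset.mp he).1
  obtain ⟨s, hs⟩ := hS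
  obtain ⟨t, ht⟩ := hSc
  obtain ⟨w⟩ := hcon.preconnected s t
  obtain ⟨d, -, hd₁, hd₂⟩ := w.exists_boundary_dart S hs ht
  have hadj := (deleteEdges_adj ..).mp d.adj
  exact hadj.2 (hE.mem_toFinset.mpr ⟨hadj.1, d.toProd.1, hd₁, d.toProd.2, hd₂, rfl⟩)

lemma edgeConn_le_betweenEdges_corner (hG : G.Connected) {A B : Set V}
    (hAB : (A ∩ B).Nonempty) (hAB' : (Aᶜ ∩ Bᶜ).Nonempty) :
    edgeConn G ≤ betweenEdges G (A ∩ B) (A ∩ Bᶜ) + betweenEdges G (A ∩ B) (Aᶜ ∩ B) +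
      betweenEdges G (A ∩ B) (Aᶜ ∩ Bᶜ) := by
  rw [← betweenEdges_inter_compl_eq]
  exact edgeConn_le_betweenEdges_compl G hG hAB (hAB'.mono fun _ hx h => hx.1 h.1)

end

lemma MincutSides.betweenEdges_compl_eq {V : Type*} {G : SimpleGraph V} {X : Finset (Sym2 V)}
    {A : Set V} (h : MincutSides G X A) : betweenEdges G A Aᶜ = edgeConn G := by
  rw [betweenEdges, ← h.2.2.2.1, Set.ncard_coe_finset, h.1.2]

theorem stmt_5_general {V : Type*} [Fintype V] (G : SimpleGraph V)
    (X Y : Finset (Sym2 V)) (A B : Set V)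
    (hX : MincutSides G X A) (hY : MincutSides G Y B) (hcross : Crossing A B) :
    2 * betweenEdges G (Aᶜ ∩ Bᶜ) (A ∩ Bᶜ) = edgeConn G ∧
    2 * betweenEdges G (Aᶜ ∩ Bᶜ) (Aᶜ ∩ B) = edgeConn G ∧
    2 * betweenEdges G (A ∩ B) (A ∩ Bᶜ) = edgeConn G ∧
    2 * betweenEdges G (A ∩ B) (Aᶜ ∩ B) = edgeConn G ∧
    betweenEdges G (Aᶜ ∩ Bᶜ) (A ∩ B) = 0 ∧
    betweenEdges G (Aᶜ ∩ B) (A ∩ Bᶜ) = 0 := by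
  obtain ⟨hP, hR, hQ, hS⟩ := hcross
  have hG : G.Connected := hX.1.1.1
  have hXsum := hX.betweenEdges_compl_eq ▸ betweenEdges_compl_eq_quadrants G A B
  have hYsum := hY.betweenEdges_compl_eq ▸ betweenEdges_compl_eq_quadrants G B A
  have hPcut := edgeConn_le_betweenEdges_corner G hG hP hS
  have hQcut := edgeConn_le_betweenEdges_corner G hG hQ (by rwa [compl_compl])
  have hRcut := edgeConn_le_betweenEdges_corner G hG hR (by rwa [compl_compl])
  have hScut := edgeConn_le_betweenEdges_corner G hG hS (by rwa [compl_compl, compl_compl])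
  simp only [compl_compl, Set.inter_comm B, Set.inter_comm Bᶜ] at *
  have := betweenEdges_comm G (A ∩ B) (A ∩ Bᶜ)
  have := betweenEdges_comm G (A ∩ B) (Aᶜ ∩ B)
  have := betweenEdges_comm G (A ∩ B) (Aᶜ ∩ Bᶜ)
  have := betweenEdges_comm G (A ∩ Bᶜ) (Aᶜ ∩ B)
  have := betweenEdges_comm G (A ∩ Bᶜ) (Aᶜ ∩ Bᶜ)
  have := betweenEdges_comm G (Aᶜ ∩ B) (Aᶜ ∩ Bᶜ)
  omega

/-- For crossing mincuts `X = ⟨A,Ā⟩`, `Y = ⟨B,B̄⟩`, the four quadrant edge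
counts each equal `λ/2`, and the two "diagonal" counts are zero. -/
theorem stmt_5 {V : Type*} [Fintype V] [DecidableEq V] (G : SimpleGraph V)
    (X Y : Finset (Sym2 V)) (A B : Set V)
    (hX : MincutSides G X A) (hY : MincutSides G Y B) (hcross : Crossing A B) :
    2 * betweenEdges G (Aᶜ ∩ Bᶜ) (A ∩ Bᶜ) = edgeConn G ∧
    2 * betweenEdges G (Aᶜ ∩ Bᶜ) (Aᶜ ∩ B) = edgeConn G ∧
    2 * betweenEdges G (A ∩ B) (A ∩ Bᶜ) = edgeConn G ∧
    2 * betweenEdges G (A ∩ B) (Aᶜ ∩ B) = edgeConn G ∧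
    betweenEdges G (Aᶜ ∩ Bᶜ) (A ∩ B) = 0 ∧
    betweenEdges G (Aᶜ ∩ B) (A ∩ Bᶜ) = 0 :=
  stmt_5_general G X Y A B hX hY hcross
end

section
/- If X = ⟨A,Ā⟩ and Y = ⟨B,B̄⟩ are crossing mincuts of a simple connected graph G, then the edge sets X and Y are disjoint: X ∩ Y = ∅. -/
open SimpleGraph

/-!
Counting the edges of `G` between the four corners `A ∩ B`, `A ∩ Bᶜ`, `Aᶜ ∩ B`, `Aᶜ ∩ Bᶜ`
gives `|∂A| + |∂B| = |∂(A ∩ B)| + |∂(A ∪ B)| + 2 e(A ∩ Bᶜ, Aᶜ ∩ B)`. For crossing mincuts the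
left side is `2λ`, while `A ∩ B` and `A ∪ B` are proper nonempty vertex sets, so their
boundaries are edge cuts of size at least `λ`; hence no edge joins `A ∩ Bᶜ` to `Aᶜ ∩ B`.
Replacing `B` by `Bᶜ`, no edge joins `A ∩ B` to `Aᶜ ∩ Bᶜ` either, and an edge lying in both
`X` and `Y` would have to be of one of these two kinds.
-/

namespace SimpleGraph

variable {V : Type*} {G : SimpleGraph V}

/-- The set whose `ncard` is `betweenEdges G S T`; its `encard` is additive without any
finiteness assumption. -/
def edgesBetween (G : SimpleGraph V) (S T : Set V) : Set (Sym2 V) :=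
  {e | e ∈ G.edgeSet ∧ ∃ a ∈ S, ∃ b ∈ T, e = s(a, b)}

lemma mk_mem_edgesBetween {S T : Set V} {a b : V} (h : G.Adj a b) (ha : a ∈ S) (hb : b ∈ T) :
    s(a, b) ∈ G.edgesBetween S T :=
  ⟨h, a, ha, b, hb, rfl⟩

lemma edgesBetween_comm (S T : Set V) : G.edgesBetween S T = G.edgesBetween T S := by
  ext e
  constructor <;> rintro ⟨he, a, ha, b, hb, rfl⟩ <;> exact ⟨he, b, hb, a, ha, Sym2.eq_swap⟩

lemma edgesBetween_union_left (S₁ S₂ T : Set V) :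
    G.edgesBetween (S₁ ∪ S₂) T = G.edgesBetween S₁ T ∪ G.edgesBetween S₂ T := by
  ext e
  constructor
  · rintro ⟨he, a, ha | ha, b, hb, rfl⟩
    exacts [Or.inl ⟨he, a, ha, b, hb, rfl⟩, Or.inr ⟨he, a, ha, b, hb, rfl⟩]
  · rintro (⟨he, a, ha, b, hb, rfl⟩ | ⟨he, a, ha, b, hb, rfl⟩)
    exacts [⟨he, a, Or.inl ha, b, hb, rfl⟩, ⟨he, a, Or.inr ha, b, hb, rfl⟩]

lemma edgesBetween_union_right (S T₁ T₂ : Set V) :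
    G.edgesBetween S (T₁ ∪ T₂) = G.edgesBetween S T₁ ∪ G.edgesBetween S T₂ := by
  rw [edgesBetween_comm, edgesBetween_union_left, edgesBetween_comm T₁, edgesBetween_comm T₂]

lemma disjoint_edgesBetween_union_left {S₁ S₂ T : Set V} (hS : Disjoint S₁ S₂)
    (hT : Disjoint S₁ T) : Disjoint (G.edgesBetween S₁ T) (G.edgesBetween S₂ T) := by
  rw [Set.disjoint_left]
  rintro _ ⟨-, a, ha, b, hb, rfl⟩ ⟨-, c, hc, d, hd, hcd⟩
  rcases Sym2.eq_iff.mp hcd with ⟨rfl, -⟩ | ⟨rfl, -⟩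
  exacts [hS.notMem_of_mem_left ha hc, hT.notMem_of_mem_left ha hd]

lemma encard_edgesBetween_union_left {S₁ S₂ T : Set V} (hS : Disjoint S₁ S₂)
    (hT : Disjoint S₁ T) :
    (G.edgesBetween (S₁ ∪ S₂) T).encard =
      (G.edgesBetween S₁ T).encard + (G.edgesBetween S₂ T).encard := by
  rw [edgesBetween_union_left, Set.encard_union_eq (disjoint_edgesBetween_union_left hS hT)]

lemma encard_edgesBetween_union_right {S T₁ T₂ : Set V} (hT : Disjoint T₁ T₂)
    (hS : Disjoint T₁ S) :
    (G.edgesBetween S (T₁ ∪ T₂)).encard =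
      (G.edgesBetween S T₁).encard + (G.edgesBetween S T₂).encard := by
  rw [edgesBetween_comm, encard_edgesBetween_union_left hT hS, edgesBetween_comm T₁,
    edgesBetween_comm T₂]

theorem encard_edgesBetween_compl_add_encard_edgesBetween_compl (A B : Set V) :
    (G.edgesBetween A Aᶜ).encard + (G.edgesBetween B Bᶜ).encard =
      (G.edgesBetween (A ∩ B) (A ∩ B)ᶜ).encard + (G.edgesBetween (A ∪ B) (A ∪ B)ᶜ).encard +
        2 * (G.edgesBetween (A ∩ Bᶜ) (Aᶜ ∩ B)).encard := by
  set P := A ∩ B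
  set Q := A ∩ Bᶜ
  set R := Aᶜ ∩ B
  set T := Aᶜ ∩ Bᶜ
  have hA : A = P ∪ Q := (Set.inter_union_compl A B).symm
  have hAc : Aᶜ = R ∪ T := (Set.inter_union_compl Aᶜ B).symm
  have hB : B = P ∪ R := by ext; simp [P, R]; tauto
  have hBc : Bᶜ = Q ∪ T := by ext; simp [Q, T]; tauto
  have hPc : Pᶜ = Q ∪ (R ∪ T) := by ext; simp [P, Q, R, T]; tauto
  have hU : A ∪ B = P ∪ (Q ∪ R) := by ext; simp [P, Q, R]; tauto
  have hUc : (A ∪ B)ᶜ = T := Set.compl_union A B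
  have dPQ : Disjoint P Q := Set.disjoint_left.2 fun _ h h' => h'.2 h.2
  have dPR : Disjoint P R := Set.disjoint_left.2 fun _ h h' => h'.1 h.1
  have dPT : Disjoint P T := Set.disjoint_left.2 fun _ h h' => h'.1 h.1
  have dQR : Disjoint Q R := Set.disjoint_left.2 fun _ h h' => h'.1 h.1
  have dQT : Disjoint Q T := Set.disjoint_left.2 fun _ h h' => h'.1 h.1
  have dRT : Disjoint R T := Set.disjoint_left.2 fun _ h h' => h'.2 h.2
  have eA : (G.edgesBetween A Aᶜ).encard = (G.edgesBetween P R).encard +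
      (G.edgesBetween P T).encard + (G.edgesBetween Q R).encard + (G.edgesBetween Q T).encard := by
    rw [hAc, hA, encard_edgesBetween_union_left dPQ (Set.disjoint_union_right.2 ⟨dPR, dPT⟩),
      encard_edgesBetween_union_right dRT dPR.symm, encard_edgesBetween_union_right dRT dQR.symm,
      ← add_assoc]
  have eB : (G.edgesBetween B Bᶜ).encard = (G.edgesBetween P Q).encard +
      (G.edgesBetween P T).encard + (G.edgesBetween R Q).encard + (G.edgesBetween R T).encard := by
    rw [hBc, hB, encard_edgesBetween_union_left dPR (Set.disjoint_union_right.2 ⟨dPQ, dPT⟩),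
      encard_edgesBetween_union_right dQT dPQ.symm, encard_edgesBetween_union_right dQT dQR,
      ← add_assoc]
  have eP : (G.edgesBetween P Pᶜ).encard = (G.edgesBetween P Q).encard +
      (G.edgesBetween P R).encard + (G.edgesBetween P T).encard := by
    rw [hPc, encard_edgesBetween_union_right (Set.disjoint_union_right.2 ⟨dQR, dQT⟩) dPQ.symm,
      encard_edgesBetween_union_right dRT dPR.symm, ← add_assoc]
  have eU : (G.edgesBetween (A ∪ B) (A ∪ B)ᶜ).encard = (G.edgesBetween P T).encard +
      (G.edgesBetween Q T).encard + (G.edgesBetween R T).encard := by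
    rw [hUc, hU, encard_edgesBetween_union_left (Set.disjoint_union_right.2 ⟨dPQ, dPR⟩) dPT,
      encard_edgesBetween_union_left dQR dQT, ← add_assoc]
  rw [eA, eB, eP, eU, edgesBetween_comm R Q]
  ring

lemma edgesBetween_compl_inter_edgesBetween_compl_subset (A B : Set V) :
    G.edgesBetween A Aᶜ ∩ G.edgesBetween B Bᶜ ⊆
      G.edgesBetween (A ∩ B) (Aᶜ ∩ Bᶜ) ∪ G.edgesBetween (A ∩ Bᶜ) (Aᶜ ∩ B) := by
  rintro _ ⟨⟨he, a, ha, b, hb, rfl⟩, -, c, hc, d, hd, hcd⟩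
  rcases Sym2.eq_iff.mp hcd with ⟨rfl, rfl⟩ | ⟨rfl, rfl⟩
  exacts [Or.inl (mk_mem_edgesBetween he ⟨ha, hc⟩ ⟨hb, hd⟩),
    Or.inr (mk_mem_edgesBetween he ⟨ha, hd⟩ ⟨hb, hc⟩)]

lemma not_connected_deleteEdges_edgesBetween_compl {S : Set V} (hS : S.Nonempty)
    (hSc : Sᶜ.Nonempty) : ¬(G.deleteEdges (G.edgesBetween S Sᶜ)).Connected := by
  obtain ⟨a, ha⟩ := hS
  obtain ⟨b, hb⟩ := hSc
  rintro hconn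
  obtain ⟨p⟩ := hconn a b
  obtain ⟨d, -, hd₁, hd₂⟩ := p.exists_boundary_dart S ha hb
  obtain ⟨hadj, hd⟩ := deleteEdges_adj.mp d.adj
  exact hd (mk_mem_edgesBetween hadj hd₁ hd₂)

end SimpleGraph

open SimpleGraph

section Mincut

variable {V : Type*} {G : SimpleGraph V}

lemma edgeConn_le_encard_edgesBetween_compl (hG : G.Connected) {S : Set V} (hS : S.Nonempty)
    (hSc : Sᶜ.Nonempty) : (edgeConn G : ℕ∞) ≤ (G.edgesBetween S Sᶜ).encard := by
  by_cases hfin : (G.edgesBetween S Sᶜ).Finite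
  · have hcut : IsEdgeCut G hfin.toFinset := by
      refine ⟨hG, ?_, ?_⟩
      · rw [Set.Finite.coe_toFinset]
        exact fun e he => he.1
      · rw [Set.Finite.coe_toFinset]
        exact not_connected_deleteEdges_edgesBetween_compl hS hSc
    rw [hfin.encard_eq_coe_toFinset_card]
    exact_mod_cast (Nat.sInf_le ⟨_, rfl, hcut⟩ : edgeConn G ≤ hfin.toFinset.card)
  · simp [Set.Infinite.encard_eq hfin]

namespace MincutSides

variable {X : Finset (Sym2 V)} {A : Set V}

lemma coe_eq (hX : MincutSides G X A) : (X : Set (Sym2 V)) = G.edgesBetween A Aᶜ :=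
  hX.2.2.2.1

lemma encard_edgesBetween_compl (hX : MincutSides G X A) :
    (G.edgesBetween A Aᶜ).encard = edgeConn G := by
  rw [← hX.coe_eq, Set.encard_coe_eq_coe_finsetCard, hX.1.2]

lemma compl (hX : MincutSides G X A) : MincutSides G X Aᶜ := by
  obtain ⟨hmin, hA, hAc, hXA, hconnA, hconnAc⟩ := hX
  refine ⟨hmin, hAc, by rwa [compl_compl], ?_, hconnAc, by rwa [compl_compl]⟩
  rw [hXA, compl_compl]
  exact edgesBetween_comm A Aᶜ

end MincutSides

lemma Crossing.compl_right {A B : Set V} (h : Crossing A B) : Crossing A Bᶜ := by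
  obtain ⟨h₁, h₂, h₃, h₄⟩ := h
  exact ⟨h₃, h₄, by rwa [compl_compl], by rwa [compl_compl]⟩

lemma edgesBetween_eq_empty_of_crossing {X Y : Finset (Sym2 V)} {A B : Set V}
    (hX : MincutSides G X A) (hY : MincutSides G Y B) (hcross : Crossing A B) :
    G.edgesBetween (A ∩ Bᶜ) (Aᶜ ∩ B) = ∅ := by
  obtain ⟨hAB, -, -, hAB'⟩ := hcross
  have hG : G.Connected := hX.1.1.1
  have hinter := edgeConn_le_encard_edgesBetween_compl hG hAB
    (hAB'.mono fun _ h h' => h.1 h'.1)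
  have hunion := edgeConn_le_encard_edgesBetween_compl (S := A ∪ B) hG
    (hAB.mono (Set.inter_subset_left.trans Set.subset_union_left)) (by rwa [Set.compl_union])
  have hsub := encard_edgesBetween_compl_add_encard_edgesBetween_compl (G := G) A B
  rw [hX.encard_edgesBetween_compl, hY.encard_edgesBetween_compl] at hsub
  have hle : (edgeConn G + edgeConn G : ℕ∞) + 2 * (G.edgesBetween (A ∩ Bᶜ) (Aᶜ ∩ B)).encard ≤
      (edgeConn G + edgeConn G : ℕ∞) + 0 :=
    (add_le_add (add_le_add hinter hunion) le_rfl).trans ((add_zero _).trans hsub).ge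
  rw [ENat.add_le_add_iff_left (by simp), nonpos_iff_eq_zero, mul_eq_zero] at hle
  simpa using hle

end Mincut

theorem stmt_6_general {V : Type*} [DecidableEq V] (G : SimpleGraph V)
    (X Y : Finset (Sym2 V)) (A B : Set V)
    (hX : MincutSides G X A) (hY : MincutSides G Y B) (hcross : Crossing A B) :
    X ∩ Y = ∅ := by
  have hdiag : G.edgesBetween (A ∩ B) (Aᶜ ∩ Bᶜ) = ∅ := by
    simpa using edgesBetween_eq_empty_of_crossing hX hY.compl hcross.compl_right
  have hanti : G.edgesBetween (A ∩ Bᶜ) (Aᶜ ∩ B) = ∅ :=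
    edgesBetween_eq_empty_of_crossing hX hY hcross
  rw [← Finset.coe_eq_empty, Finset.coe_inter, hX.coe_eq, hY.coe_eq]
  simpa [hdiag, hanti] using edgesBetween_compl_inter_edgesBetween_compl_subset (G := G) A B

/-- Crossing mincuts have disjoint edge sets. -/
theorem stmt_6 {V : Type*} [Fintype V] [DecidableEq V] (G : SimpleGraph V)
    (X Y : Finset (Sym2 V)) (A B : Set V)
    (hX : MincutSides G X A) (hY : MincutSides G Y B) (hcross : Crossing A B) :
    X ∩ Y = ∅ :=
  stmt_6_general G X Y A B hX hY hcross
end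

section
/- Let G be a simple connected graph such that every vertex of G has degree λ(G) and G possesses at least one non-trivial mincut. Then the number of mincuts of G is strictly greater than |V(G)|, and consequently G is not isomorphic to its mincut graph X(G). -/
/-!
The `|V|` trivial mincuts `∂v` are pairwise distinct: if `∂u = ∂v` with `u ≠ v`, connectivity forces
`G = K₂`, whose only mincut is trivial. Together with the non-trivial mincut this gives more than
`|V|` mincuts, so `X(G)` has more vertices than `G`.
-/

open SimpleGraph

section

variable {V : Type*} {G : SimpleGraph V}

theorem IsEdgeCut.nontrivial {X : Finset (Sym2 V)} (h : IsEdgeCut G X) : Nontrivial V := by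
  by_contra hV
  rw [not_nontrivial_iff_subsingleton] at hV
  have : Nonempty V := h.1.nonempty
  exact h.2.2 (Connected.mk fun a b => by rw [Subsingleton.elim a b])

theorem isEdgeCut_incidenceFinset [Fintype V] [DecidableEq V] [DecidableRel G.Adj] [Nontrivial V]
    (hG : G.Connected) (v : V) : IsEdgeCut G (G.incidenceFinset v) := by
  refine ⟨hG, by simpa using G.incidenceSet_subset v, fun hc => ?_⟩
  obtain ⟨u, hu⟩ := exists_ne v
  obtain ⟨p⟩ := hc.preconnected v u
  cases p with
  | nil => exact hu rfl
  | cons hadj _ =>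
    rw [deleteEdges_adj, coe_incidenceFinset] at hadj
    exact hadj.2 (G.mk'_mem_incidenceSet_left_iff.mpr hadj.1)

theorem isMincut_incidenceFinset [Fintype V] [DecidableEq V] [DecidableRel G.Adj] [Nontrivial V]
    (hG : G.Connected) {v : V} (hv : G.degree v = edgeConn G) :
    IsMincut G (G.incidenceFinset v) :=
  ⟨isEdgeCut_incidenceFinset hG v, by rw [card_incidenceFinset_eq_degree, hv]⟩

theorem SimpleGraph.Connected.eq_or_eq_of_neighborSet_subset (hG : G.Connected) {u v : V}
    (hu : G.neighborSet u ⊆ {v}) (hv : G.neighborSet v ⊆ {u}) (x : V) : x = u ∨ x = v := by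
  by_contra hx
  obtain ⟨d, -, hd, hd'⟩ :=
    (hG.preconnected u x).some.exists_boundary_dart {u, v} (by simp) (by simpa using hx)
  rcases hd with hd | hd
  · exact hd' (by simpa using Or.inr (hu (hd ▸ d.adj)))
  · exact hd' (by simpa using Or.inl (hv (hd ▸ d.adj)))

theorem SimpleGraph.neighborSet_subset_of_incidenceSet_eq {u v : V} (huv : u ≠ v)
    (h : G.incidenceSet u = G.incidenceSet v) : G.neighborSet u ⊆ {v} := fun w hw => by
  have : s(u, w) ∈ G.incidenceSet v := h ▸ G.mk'_mem_incidenceSet_left_iff.mpr hw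
  rcases (G.mk'_mem_incidenceSet_iff.mp this).2 with hvu | hvw
  · exact absurd hvu.symm huv
  · exact hvw.symm

/-- Two distinct vertices with the same incident edges only occur in `K₂`. -/
theorem SimpleGraph.Connected.edgeSet_subset_incidenceSet_of_incidenceSet_eq (hG : G.Connected)
    {u v : V} (huv : u ≠ v) (h : G.incidenceSet u = G.incidenceSet v) :
    G.edgeSet ⊆ G.incidenceSet u := by
  have hall := hG.eq_or_eq_of_neighborSet_subset (neighborSet_subset_of_incidenceSet_eq huv h)
    (neighborSet_subset_of_incidenceSet_eq huv.symm h.symm)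
  intro e he
  induction e with
  | h a b =>
    refine G.mk'_mem_incidenceSet_iff.mpr ⟨he, ?_⟩
    have hab : a ≠ b := G.ne_of_adj he
    rcases hall a with rfl | rfl <;> rcases hall b with rfl | rfl <;> simp_all

theorem IsMincut.coe_eq_incidenceSet_of_incidenceSet_eq [Fintype V] [DecidableEq V]
    [DecidableRel G.Adj] {X : Finset (Sym2 V)} (hX : IsMincut G X) {u v : V}
    (hu : G.degree u = edgeConn G) (huv : u ≠ v) (h : G.incidenceSet u = G.incidenceSet v) :
    ↑X = G.incidenceSet u := by
  have hsub : X ⊆ G.incidenceFinset u := by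
    rw [← Finset.coe_subset, coe_incidenceFinset]
    exact hX.1.2.1.trans (hX.1.1.edgeSet_subset_incidenceSet_of_incidenceSet_eq huv h)
  have hcard : (G.incidenceFinset u).card ≤ X.card := by
    rw [card_incidenceFinset_eq_degree, hu, hX.2]
  rw [Finset.eq_of_subset_of_card_le hsub hcard, coe_incidenceFinset]

end

/-- If every vertex of a connected graph `G` has degree `λ(G)` and `G` has a
non-trivial mincut, then `G` has more than `|V(G)|` mincuts, and `G ≇ X(G)`. -/
theorem stmt_11 {V : Type*} [Fintype V] [DecidableEq V] (G : SimpleGraph V) [DecidableRel G.Adj]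
    (hconn : G.Connected) (hdeg : ∀ v : V, G.degree v = edgeConn G)
    (hex : ∃ X : Finset (Sym2 V), IsMincut G X ∧
      ¬∃ v : V, (↑X : Set (Sym2 V)) = G.incidenceSet v) :
    Fintype.card V < Nat.card {X : Finset (Sym2 V) // IsMincut G X} ∧
    ¬Nonempty (G ≃g mincutGraph G) := by
  classical
  obtain ⟨X₀, hX₀, hX₀nt⟩ := hex
  have := hX₀.1.nontrivial
  let trivialCut (v : V) : {X // IsMincut G X} := ⟨_, isMincut_incidenceFinset hconn (hdeg v)⟩
  have hinj : Function.Injective trivialCut := by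
    intro u v huv
    by_contra hne
    have hfin : G.incidenceFinset u = G.incidenceFinset v := congrArg Subtype.val huv
    have hsame : G.incidenceSet u = G.incidenceSet v := by
      rw [← coe_incidenceFinset, hfin, coe_incidenceFinset]
    exact hX₀nt ⟨u, hX₀.coe_eq_incidenceSet_of_incidenceSet_eq (hdeg u) hne hsame⟩
  have hX₀range : ⟨X₀, hX₀⟩ ∉ Set.range trivialCut := by
    rintro ⟨v, hv⟩
    have hfin : G.incidenceFinset v = X₀ := congrArg Subtype.val hv
    exact hX₀nt ⟨v, by rw [← hfin, coe_incidenceFinset]⟩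
  have hcard : Fintype.card V < Nat.card {X : Finset (Sym2 V) // IsMincut G X} := by
    rw [Nat.card_eq_fintype_card]
    exact Fintype.card_lt_of_injective_of_notMem trivialCut hinj hX₀range
  refine ⟨hcard, fun ⟨e⟩ => ?_⟩
  rw [← Nat.card_congr e.toEquiv, Nat.card_eq_fintype_card] at hcard
  exact hcard.false
end

section
/- If G is a simple connected graph that is super-λ but not regular, then the number of mincuts of G is strictly less than |V(G)|, so |V(X(G))| < |V(G)| and G is not isomorphic to X(G). -/
/-!
A super-λ graph assigns to each mincut a vertex of minimum degree whose incidence set it is; this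
assignment is injective, and a vertex of non-minimum degree (which exists as `G` is not regular)
lies outside its image. Hence there are fewer mincuts than vertices, and `G ≇ X(G)` by counting.
-/

open SimpleGraph

namespace SimpleGraph

variable {V : Type*} [Fintype V] (G : SimpleGraph V)

lemma exists_degree_ne_minDegree [DecidableRel G.Adj] (hnreg : ¬∃ r : ℕ, G.IsRegularOfDegree r) :
    ∃ w : V, G.degree w ≠ G.minDegree := by
  by_contra! h
  exact hnreg ⟨G.minDegree, h⟩

lemma card_lt_of_forall_eq_incidenceSet {P : Finset (Sym2 V) → Prop} {p : V → Prop}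
    (h : ∀ X, P X → ∃ v, p v ∧ ↑X = G.incidenceSet v) {w : V} (hw : ¬p w) :
    Nat.card {X // P X} < Fintype.card V := by
  choose f hfp hfX using fun X : {X // P X} => h X.1 X.2
  have hinj : Function.Injective f := fun X Y hXY =>
    Subtype.ext <| Finset.coe_injective <| by rw [hfX X, hfX Y, hXY]
  have hw_notMem : w ∉ Set.range f := by
    rintro ⟨X, rfl⟩
    exact hw (hfp X)
  have := Fintype.ofFinite {X // P X}
  rw [Nat.card_eq_fintype_card]
  exact Fintype.card_lt_of_injective_of_notMem f hinj hw_notMem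

end SimpleGraph

lemma SimpleGraph.Iso.not_nonempty_of_card_lt {V W : Type*} {G : SimpleGraph V}
    {H : SimpleGraph W} (hlt : Nat.card W < Nat.card V) : ¬Nonempty (G ≃g H) :=
  fun ⟨e⟩ => (Nat.card_congr e.toEquiv).not_gt hlt

theorem stmt_12_general {V : Type*} [Fintype V] [DecidableEq V] (G : SimpleGraph V) [DecidableRel G.Adj]
    (hsuper : ∀ X : Finset (Sym2 V), IsMincut G X →
      ∃ v : V, G.degree v = G.minDegree ∧ ↑X = G.incidenceSet v)
    (hnreg : ¬∃ r : ℕ, G.IsRegularOfDegree r) :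
    Nat.card {X : Finset (Sym2 V) // IsMincut G X} < Fintype.card V ∧
    ¬Nonempty (G ≃g mincutGraph G) := by
  obtain ⟨w, hw⟩ := G.exists_degree_ne_minDegree hnreg
  have hlt := G.card_lt_of_forall_eq_incidenceSet hsuper hw
  exact ⟨hlt, Iso.not_nonempty_of_card_lt (hlt.trans_eq Nat.card_eq_fintype_card.symm)⟩

/-- If `G` is connected, super-λ but not regular, then `G` has fewer mincuts
than vertices, so `|V(X(G))| < |V(G)|` and `G ≇ X(G)`. -/
theorem stmt_12 {V : Type*} [Fintype V] [DecidableEq V] (G : SimpleGraph V) [DecidableRel G.Adj]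
    (hconn : G.Connected)
    (hsuper : ∀ X : Finset (Sym2 V), IsMincut G X →
      ∃ v : V, G.degree v = G.minDegree ∧ ↑X = G.incidenceSet v)
    (hnreg : ¬∃ r : ℕ, G.IsRegularOfDegree r) :
    Nat.card {X : Finset (Sym2 V) // IsMincut G X} < Fintype.card V ∧
    ¬Nonempty (G ≃g mincutGraph G) :=
  stmt_12_general G hsuper hnreg
end
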